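/- arXiv:1704.00035 — 2 statements merged into one kernel-verified Lean document; each statement's English description precedes it below -/
import Mathlib

section
/- For n×n real matrices A and B and d = k + s with k ∈ {0,…,n−1} and s ∈ [0,1], the singular value function ω_d is submultiplicative: ω_d(AB) ≤ ω_d(A)·ω_d(B), where ω_d(A) = α₁(A)⋯α_k(A)·α_{k+1}(A)^s and α₁ ≥ ⋯ ≥ αₙ are the singular values. -/
open scoped ENNReal
open Filter Set

/-- `α` (ℕ-indexed, nonincreasing, vanishing from index n on) lists the singular values
of the n×n real matrix A, i.e. A = U · diag(α) · V with U, V orthogonal. -/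
def IsSVals (n : ℕ) (A : Matrix (Fin n) (Fin n) ℝ) (α : ℕ → ℝ) : Prop :=
  (∀ i j, i ≤ j → α j ≤ α i) ∧ (∀ i, 0 ≤ α i) ∧ (∀ i, n ≤ i → α i = 0) ∧
  ∃ U V : Matrix (Fin n) (Fin n) ℝ,
    U ∈ Matrix.orthogonalGroup (Fin n) ℝ ∧ V ∈ Matrix.orthogonalGroup (Fin n) ℝ ∧
    A = U * Matrix.diagonal (fun i : Fin n => α i) * V

/-- The singular value function ω_d(A) = α₁⋯α_k·α_{k+1}^s for d = k + s
(here α is 0-indexed: α (i-1) is the i-th singular value α_i). -/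
noncomputable def omegaD (α : ℕ → ℝ) (k : ℕ) (s : ℝ) : ℝ :=
  (∏ i ∈ Finset.range k, α i) * α k ^ s

/-!
The `k`-th compound matrix `C_k(A)`, the matrix of all `k × k` minors of `A`, is multiplicative
by the Cauchy–Binet formula, sends orthogonal matrices to orthogonal matrices and diagonal
matrices to diagonal ones. Applied to a singular value decomposition `A = U diag(α) V`, this
shows that the operator norm of `C_k(A)` is the largest product of `k` singular values,
`α₁ ⋯ α_k`. Submultiplicativity of the operator norm then gives Horn's inequality
`γ₁ ⋯ γ_k ≤ (α₁ ⋯ α_k)(β₁ ⋯ β_k)` for the singular values `γ` of `AB`, and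
`ω_{k+s} = (γ₁ ⋯ γ_k)^{1-s} (γ₁ ⋯ γ_{k+1})^s` interpolates between two such inequalities.
-/

open Finset

theorem Function.Injective.exists_perm_eq_orderEmbOfFin_comp {m : Type*} [LinearOrder m] {k : ℕ}
    {φ : Fin k → m} (hφ : Function.Injective φ) :
    ∃ (hS : (Finset.univ.image φ).card = k) (σ : Equiv.Perm (Fin k)),
      φ = (Finset.univ.image φ).orderEmbOfFin hS ∘ σ := by
  set S := Finset.univ.image φ
  have hS : S.card = k := by rw [Finset.card_image_of_injective _ hφ, card_univ, Fintype.card_fin]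
  let ψ : Fin k → Fin k := fun i =>
    (S.orderIsoOfFin hS).symm ⟨φ i, mem_image_of_mem φ (mem_univ i)⟩
  have hψ : Function.Injective ψ := fun a b hab => hφ (by simpa [ψ] using hab)
  refine ⟨hS, Equiv.ofBijective ψ (Finite.injective_iff_bijective.mp hψ), funext fun i => ?_⟩
  simp [ψ, ← coe_orderIsoOfFin_apply]

theorem sum_filter_injective_eq_sum_sum_perm {m : Type*} [Fintype m] [LinearOrder m] {k : ℕ}
    {M : Type*} [AddCommMonoid M] (g : (Fin k → m) → M) :
    ∑ φ with Function.Injective φ, g φ =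
      ∑ S : {S : Finset m // S.card = k}, ∑ σ : Equiv.Perm (Fin k),
        g (S.1.orderEmbOfFin S.2 ∘ σ) := by
  rw [← Fintype.sum_prod_type']
  symm
  refine sum_nbij (fun p => p.1.1.orderEmbOfFin p.1.2 ∘ p.2) ?_ ?_ ?_ (fun _ _ => rfl)
  · intro p _
    simpa using (p.1.1.orderEmbOfFin p.1.2).injective.comp p.2.injective
  · rintro ⟨⟨S, hS⟩, σ⟩ - ⟨⟨T, hT⟩, τ⟩ - h
    have hrange := congrArg Set.range h
    simp only [Set.range_comp, Equiv.range_eq_univ, Set.image_univ, range_orderEmbOfFin,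
      coe_inj] at hrange
    subst hrange
    exact Prod.ext rfl (Equiv.ext fun i => (S.orderEmbOfFin hS).injective (congrFun h i))
  · intro φ hφ
    obtain ⟨hS, σ, hσ⟩ := (mem_filter.mp hφ).2.exists_perm_eq_orderEmbOfFin_comp
    exact ⟨(⟨_, hS⟩, σ), mem_univ _, hσ.symm⟩

namespace Matrix

variable {R : Type*} [CommRing R] {l m n : Type*} {k : ℕ}

theorem det_mul_eq_sum_prod_mul_det_submatrix [Fintype m]
    (P : Matrix (Fin k) m R) (Q : Matrix m (Fin k) R) :
    (P * Q).det = ∑ φ : Fin k → m, (∏ i, P i (φ i)) * (Q.submatrix φ id).det := by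
  have hrows : P * Q = fun i => ∑ l, P i l • Q l := by
    ext i j
    simp [mul_apply]
  rw [det, hrows]
  exact (detRowAlternating.toMultilinearMap.map_sum fun i l => P i l • Q l).trans
    (sum_congr rfl fun φ _ => detRowAlternating.toMultilinearMap.map_smul_univ _ _)

theorem det_submatrix_id_eq_sum_perm (P : Matrix (Fin k) m R) (e : Fin k → m) :
    (P.submatrix id e).det =
      ∑ σ : Equiv.Perm (Fin k), Equiv.Perm.sign σ * ∏ i, P i (e (σ i)) := by
  rw [← det_transpose, det_apply']
  rfl

variable [LinearOrder l] [LinearOrder m] [LinearOrder n]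

theorem det_mul_eq_sum_det_submatrix_mul_det_submatrix [Fintype m]
    (P : Matrix (Fin k) m R) (Q : Matrix m (Fin k) R) :
    (P * Q).det = ∑ S : {S : Finset m // S.card = k},
      (P.submatrix id (S.1.orderEmbOfFin S.2)).det *
        (Q.submatrix (S.1.orderEmbOfFin S.2) id).det := by
  have hnoninj : ∀ φ : Fin k → m, ¬ Function.Injective φ → (Q.submatrix φ id).det = 0 := by
    intro φ hφ
    obtain ⟨i, j, hij, hne⟩ : ∃ i j, φ i = φ j ∧ i ≠ j := by
      simpa [Function.Injective] using hφ
    exact det_zero_of_row_eq hne (by ext; simp [hij])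
  rw [det_mul_eq_sum_prod_mul_det_submatrix, ← sum_filter_of_ne (p := Function.Injective)
    fun φ _ h => by_contra fun hφ => h (by rw [hnoninj φ hφ, mul_zero]),
    sum_filter_injective_eq_sum_sum_perm]
  refine sum_congr rfl fun S _ => ?_
  simp_rw [det_submatrix_id_eq_sum_perm, sum_mul]
  refine sum_congr rfl fun σ _ => ?_
  have hperm : Q.submatrix (S.1.orderEmbOfFin S.2 ∘ σ) id =
      (Q.submatrix (S.1.orderEmbOfFin S.2) id).submatrix σ id := rfl
  rw [hperm, det_permute]
  simp only [Function.comp_apply]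
  ring

variable (k) in
def compound (M : Matrix m n R) :
    Matrix {S : Finset m // S.card = k} {T : Finset n // T.card = k} R :=
  fun S T => (M.submatrix (S.1.orderEmbOfFin S.2) (T.1.orderEmbOfFin T.2)).det

theorem compound_mul [Fintype m] (M : Matrix l m R) (N : Matrix m n R) :
    compound k (M * N) = compound k M * compound k N := by
  ext S T
  rw [compound, submatrix_mul _ _ _ id _ Function.bijective_id,
    det_mul_eq_sum_det_submatrix_mul_det_submatrix]
  rfl

theorem compound_conjTranspose [StarRing R] (M : Matrix m n R) :
    compound k Mᴴ = (compound k M)ᴴ := by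
  ext S T
  rw [conjTranspose_apply, compound, compound, ← det_conjTranspose]
  rfl

theorem compound_diagonal (d : m → R) :
    compound k (diagonal d) = diagonal fun S => ∏ i ∈ S.1, d i := by
  ext S T
  by_cases hST : S = T
  · subst hST
    rw [compound, submatrix_diagonal _ _ (S.1.orderEmbOfFin S.2).injective, det_diagonal,
      diagonal_apply_eq]
    conv_rhs => rw [← map_orderEmbOfFin_univ S.1 S.2, prod_map]
    rfl
  · rw [diagonal_apply_ne _ hST]
    obtain ⟨x, hxT, hxS⟩ : ∃ x ∈ T.1, x ∉ S.1 := by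
      by_contra! h
      exact hST (Subtype.ext (eq_of_subset_of_card_le h (by rw [S.2, T.2])).symm)
    obtain ⟨j, rfl⟩ : x ∈ Set.range (T.1.orderEmbOfFin T.2) := by simpa using hxT
    refine det_eq_zero_of_column_eq_zero j fun i => diagonal_apply_ne _ fun h => ?_
    exact hxS (h ▸ orderEmbOfFin_mem S.1 S.2 i)

theorem compound_one [Fintype m] : compound k (1 : Matrix m m R) = 1 := by
  rw [← diagonal_one, compound_diagonal]
  simp

theorem compound_mem_unitaryGroup [Fintype m] [StarRing R] {U : Matrix m m R}
    (hU : U ∈ unitaryGroup m R) : compound k U ∈ unitaryGroup _ R := by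
  rw [mem_unitaryGroup_iff, star_eq_conjTranspose] at hU ⊢
  rw [← compound_conjTranspose, ← compound_mul, hU, compound_one]

end Matrix

theorem Fin.val_le_of_strictMono {k n : ℕ} {f : Fin k → Fin n} (hf : StrictMono f) (i : Fin k) :
    (i : ℕ) ≤ f i :=
  calc (i : ℕ) = (Finset.Iio i).card := (Fin.card_Iio i).symm
    _ ≤ (Finset.Iio (f i)).card :=
      card_le_card_of_injOn f (fun j hj => by simpa using hf (by simpa using hj))
        hf.injective.injOn
    _ = f i := Fin.card_Iio _

theorem prod_le_prod_range_of_antitone {n k : ℕ} {α : ℕ → ℝ} (hanti : Antitone α)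
    (hnn : ∀ i, 0 ≤ α i) {S : Finset (Fin n)} (hS : S.card = k) :
    ∏ i ∈ S, α i ≤ ∏ i ∈ Finset.range k, α i := by
  conv_lhs => rw [← map_orderEmbOfFin_univ S hS, prod_map]
  rw [← Fin.prod_univ_eq_prod_range]
  exact prod_le_prod (fun i _ => hnn _)
    fun i _ => hanti (Fin.val_le_of_strictMono (S.orderEmbOfFin hS).strictMono i)

section SingularValues

open Matrix
open scoped Matrix.Norms.L2Operator

theorem IsSVals.norm_compound {n k : ℕ} {A : Matrix (Fin n) (Fin n) ℝ} {α : ℕ → ℝ}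
    (hα : IsSVals n A α) (hk : k ≤ n) : ‖compound k A‖ = ∏ i ∈ Finset.range k, α i := by
  obtain ⟨hanti, hnn, -, U, V, hU, hV, rfl⟩ := hα
  have hprod_nonneg (S : Finset (Fin n)) : 0 ≤ ∏ i ∈ S, α i := prod_nonneg fun i _ => hnn i
  rw [compound_mul, compound_mul, compound_diagonal, mul_assoc,
    CStarRing.norm_mem_unitary_mul _ (compound_mem_unitaryGroup hU),
    CStarRing.norm_mul_mem_unitary _ (compound_mem_unitaryGroup hV), l2_opNorm_diagonal]
  refine le_antisymm ((pi_norm_le_iff_of_nonneg (prod_nonneg fun i _ => hnn i)).2 fun S => ?_) ?_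
  · rw [Real.norm_of_nonneg (hprod_nonneg S.1)]
    exact prod_le_prod_range_of_antitone hanti hnn S.2
  · let S₀ : Finset (Fin n) := Finset.univ.map (Fin.castLEEmb hk)
    have hS₀ : S₀.card = k := by simp [S₀]
    calc ∏ i ∈ Finset.range k, α i = ∏ i ∈ S₀, α i := by
          simp [S₀, Fin.prod_univ_eq_prod_range (fun i => α i) k]
      _ ≤ _ := (Real.le_norm_self _).trans
          (norm_le_pi_norm (fun S : {S : Finset (Fin n) // S.card = k} => ∏ i ∈ S.1, α i)
            ⟨S₀, hS₀⟩)

theorem IsSVals.prod_range_le_mul {n k : ℕ} {A B : Matrix (Fin n) (Fin n) ℝ} {α β γ : ℕ → ℝ}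
    (hγ : IsSVals n (A * B) γ) (hα : IsSVals n A α) (hβ : IsSVals n B β) (hk : k ≤ n) :
    ∏ i ∈ Finset.range k, γ i ≤ (∏ i ∈ Finset.range k, α i) * ∏ i ∈ Finset.range k, β i := by
  rw [← hγ.norm_compound hk, ← hα.norm_compound hk, ← hβ.norm_compound hk, compound_mul]
  exact norm_mul_le _ _

end SingularValues

theorem omegaD_eq_rpow_mul_rpow {α : ℕ → ℝ} (hnn : ∀ i, 0 ≤ α i) (k : ℕ) (s : ℝ) :
    omegaD α k s =
      (∏ i ∈ Finset.range k, α i) ^ (1 - s) * (∏ i ∈ Finset.range (k + 1), α i) ^ s := by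
  rw [omegaD, prod_range_succ]
  rcases (prod_nonneg fun i _ => hnn i : 0 ≤ ∏ i ∈ Finset.range k, α i).eq_or_lt with h | h
  · rw [← h]
    rcases eq_or_ne s 1 with rfl | hs
    · simp
    · simp [Real.zero_rpow (sub_ne_zero.mpr hs.symm)]
  · rw [Real.mul_rpow h.le (hnn k), ← mul_assoc, ← Real.rpow_add h, sub_add_cancel, Real.rpow_one]

/-- submultiplicativity of the singular value function:
ω_d(A·B) ≤ ω_d(A)·ω_d(B) for d = k + s, k ∈ {0,…,n−1}, s ∈ [0,1]. -/
theorem stmt10 (n : ℕ) (A B : Matrix (Fin n) (Fin n) ℝ) (α β γ : ℕ → ℝ)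
    (hα : IsSVals n A α) (hβ : IsSVals n B β) (hγ : IsSVals n (A * B) γ)
    (k : ℕ) (hk : k < n) (s : ℝ) (hs0 : 0 ≤ s) (hs1 : s ≤ 1) :
    omegaD γ k s ≤ omegaD α k s * omegaD β k s := by
  have hprod_nonneg {δ : ℕ → ℝ} (hδ : ∀ i, 0 ≤ δ i) (j : ℕ) : 0 ≤ ∏ i ∈ Finset.range j, δ i :=
    prod_nonneg fun i _ => hδ i
  have horn_k := hγ.prod_range_le_mul hα hβ hk.le
  have horn_k1 := hγ.prod_range_le_mul hα hβ (Nat.succ_le_of_lt hk)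
  rw [omegaD_eq_rpow_mul_rpow hγ.2.1, omegaD_eq_rpow_mul_rpow hα.2.1,
    omegaD_eq_rpow_mul_rpow hβ.2.1]
  calc _ ≤ ((∏ i ∈ Finset.range k, α i) * ∏ i ∈ Finset.range k, β i) ^ (1 - s) *
        ((∏ i ∈ Finset.range (k + 1), α i) * ∏ i ∈ Finset.range (k + 1), β i) ^ s :=
        mul_le_mul (Real.rpow_le_rpow (hprod_nonneg hγ.2.1 k) horn_k (sub_nonneg.2 hs1))
          (Real.rpow_le_rpow (hprod_nonneg hγ.2.1 (k + 1)) horn_k1 hs0)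
          (Real.rpow_nonneg (hprod_nonneg hγ.2.1 (k + 1)) s)
          (Real.rpow_nonneg (mul_nonneg (hprod_nonneg hα.2.1 k) (hprod_nonneg hβ.2.1 k)) (1 - s))
    _ = _ := by
      rw [Real.mul_rpow (hprod_nonneg hα.2.1 k) (hprod_nonneg hβ.2.1 k),
        Real.mul_rpow (hprod_nonneg hα.2.1 (k + 1)) (hprod_nonneg hβ.2.1 (k + 1))]
      ring
end

section
/- Let α₁ ≥ α₂ ≥ α₃ > 0 with α₁α₂α₃ = e^{−(σ+b+1)t} and α₁ ≤ e^{at}, a > 0, and suppose α₁α₂ ≤ e^{at}. Then for d = 2 + s with s = a/(σ + b + 1 + a) ∈ (0,1), one has α₁α₂α₃^s ≤ 1; i.e., the singular value function ω_d is bounded by 1, so the Lyapunov dimension estimate dim ≤ 2 + a/(σ + b + 1 + a) follows. -/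
/-!
With `P = α₁α₂` and `k = σ + b + 1`, the constant divergence gives
`P α₃^s = P^(1-s) (P α₃)^s = P^(1-s) e^(-k t s) ≤ e^(a t (1-s)) e^(-k t s)`,
and `s = a / (k + a)` is exactly the exponent with `a (1 - s) = k s`, so the bound is `1`.
-/

open Real

lemma mul_rpow_eq_rpow_one_sub_mul_mul_rpow {x y : ℝ} (hx : 0 < x) (hy : 0 ≤ y) (s : ℝ) :
    x * y ^ s = x ^ (1 - s) * (x * y) ^ s := by
  rw [mul_rpow hx.le hy, ← mul_assoc, ← rpow_add hx, sub_add_cancel, rpow_one]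

lemma mul_rpow_le_rpow_one_sub_mul_rpow {x y c M s : ℝ} (hx : 0 < x) (hy : 0 ≤ y)
    (hxy : x * y = c) (hxM : x ≤ M) (hs : s ≤ 1) :
    x * y ^ s ≤ M ^ (1 - s) * c ^ s := by
  subst hxy
  rw [mul_rpow_eq_rpow_one_sub_mul_mul_rpow hx hy]
  gcongr

lemma exp_rpow_one_sub_mul_exp_rpow_eq_one {k a : ℝ} (hka : k + a ≠ 0) (t : ℝ) :
    exp (a * t) ^ (1 - a / (k + a)) * exp (-k * t) ^ (a / (k + a)) = 1 := by
  rw [← exp_mul, ← exp_mul, ← exp_add, exp_eq_one_iff]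
  field_simp
  ring

theorem stmt18_general (σ b a t : ℝ) (hσ : 0 < σ) (hb : 0 < b) (ha : 0 < a)
    (α₁ α₂ α₃ : ℝ) (h3 : 0 < α₃)
    (hdet : α₁ * α₂ * α₃ = Real.exp (-(σ + b + 1) * t))
    (h12' : α₁ * α₂ ≤ Real.exp (a * t)) :
    0 < a / (σ + b + 1 + a) ∧ a / (σ + b + 1 + a) < 1 ∧
    α₁ * α₂ * α₃ ^ (a / (σ + b + 1 + a)) ≤ 1 := by
  have hs1 : a / (σ + b + 1 + a) < 1 := (div_lt_one (by positivity)).2 (by linarith)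
  refine ⟨by positivity, hs1, ?_⟩
  have hP : 0 < α₁ * α₂ := pos_of_mul_pos_left (hdet ▸ exp_pos _) h3.le
  calc α₁ * α₂ * α₃ ^ (a / (σ + b + 1 + a))
      ≤ exp (a * t) ^ (1 - a / (σ + b + 1 + a)) *
          exp (-(σ + b + 1) * t) ^ (a / (σ + b + 1 + a)) :=
        mul_rpow_le_rpow_one_sub_mul_rpow hP h3.le hdet h12' hs1.le
    _ = 1 := exp_rpow_one_sub_mul_exp_rpow_eq_one (by positivity) t

/-- algebraic core of the dimension estimate for local Lorenz attractors:
if α₁ ≥ α₂ ≥ α₃ > 0, α₁α₂α₃ = e^{−(σ+b+1)t}, α₁ ≤ e^{at} and α₁α₂ ≤ e^{at}, then with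
s = a/(σ+b+1+a) ∈ (0,1) one has α₁α₂α₃^s ≤ 1, i.e. ω_{2+s} ≤ 1, giving the Lyapunov
dimension estimate dim ≤ 2 + a/(σ+b+1+a). -/
theorem stmt18 (σ b a t : ℝ) (hσ : 0 < σ) (hb : 0 < b) (ha : 0 < a) (ht : 0 < t)
    (α₁ α₂ α₃ : ℝ) (h12 : α₂ ≤ α₁) (h23 : α₃ ≤ α₂) (h3 : 0 < α₃)
    (hdet : α₁ * α₂ * α₃ = Real.exp (-(σ + b + 1) * t))
    (h1 : α₁ ≤ Real.exp (a * t))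
    (h12' : α₁ * α₂ ≤ Real.exp (a * t)) :
    0 < a / (σ + b + 1 + a) ∧ a / (σ + b + 1 + a) < 1 ∧
    α₁ * α₂ * α₃ ^ (a / (σ + b + 1 + a)) ≤ 1 :=
  stmt18_general σ b a t hσ hb ha α₁ α₂ α₃ h3 hdet h12'
end
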